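/- Uniqueness of the realizing activity for inhibitory output signals (Theorem 4.1, uniqueness part): assume σ is of class C² with σ' ≥ 0 and σ_M = sup σ < ∞, let I : ℝ → ℝ be bounded measurable, and let S : ℝ → [0,∞) be measurable with ∫_ℝ S(w) dw = 1 and S(w) = 0 for almost every w > 0. Then there is at most one N̄ > 0 such that N̄ · ∫_ℝ S(w) Z_{N̄,I}(w) dw = a. -/

import Mathlib

/-!
Writing `c = 2 I(w) + 2 w σ(N̄)`, the integrand of `Z` is `exp ((v' - v) (v' + v - c) / 2a)` with
`v ≤ v'`, so `Z` is antitone in `c`. For `w ≤ 0` the drift `c` is antitone in `N̄` because `σ` is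
nondecreasing, and since `S` is supported in `w ≤ 0` the average `∫ S Z` is nondecreasing in `N̄`.
Hence `N̄ ↦ N̄ ∫ S Z` is strictly increasing wherever it is positive and takes the value `a` at most
once.
-/

open MeasureTheory Real Set Filter

/-- The partition function `Z_{N̄,I}(w)` of the stationary LIF problem. -/
noncomputable def Zfun (a VR VF : ℝ) (I σ : ℝ → ℝ) (w N : ℝ) : ℝ :=
  ∫ v in Set.Iic VF, ∫ v' in Set.Icc (max VR v) VF,
    Real.exp ((v' - v) * (v' + v - 2 * I w - 2 * w * σ N) / (2 * a))

lemma antitone_setIntegral_Icc_left {f : ℝ → ℝ} (hf : Continuous f) (hf0 : 0 ≤ f) (b : ℝ) :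
    Antitone fun x => ∫ y in Icc x b, f y := fun _ _ hx =>
  setIntegral_mono_set hf.integrableOn_Icc (ae_of_all _ fun y => hf0 y)
    (ae_of_all _ (Icc_subset_Icc_left hx))

section PartitionFn

variable (a VR VF : ℝ)

noncomputable def partitionFn (c : ℝ) : ℝ :=
  ∫ v in Iic VF, ∫ v' in Icc (max VR v) VF, exp ((v' - v) * (v' + v - c) / (2 * a))

lemma Zfun_eq_partitionFn (I σ : ℝ → ℝ) (w N : ℝ) :
    Zfun a VR VF I σ w N = partitionFn a VR VF (2 * I w + 2 * w * σ N) := by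
  simp only [Zfun, partitionFn, sub_add_eq_sub_sub]

lemma partitionFn_nonneg (c : ℝ) : 0 ≤ partitionFn a VR VF c :=
  setIntegral_nonneg measurableSet_Iic fun _ _ =>
    setIntegral_nonneg measurableSet_Icc fun _ _ => (exp_pos _).le

variable {a}

/-- The integrand factors as `exp (p v') * exp (-p v)` with `p x = (x - c/2)² / 2a`; the inner
integral of `exp ∘ p` is bounded, and `exp (-p v)` is a Gaussian. -/
lemma integrable_partitionFn_integrand (ha : 0 < a) (c : ℝ) :
    Integrable fun v => ∫ v' in Icc (max VR v) VF, exp ((v' - v) * (v' + v - c) / (2 * a)) := by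
  set p : ℝ → ℝ := fun x => (x - c / 2) ^ 2 / (2 * a)
  set H : ℝ → ℝ := fun v => ∫ v' in Icc (max VR v) VF, exp (p v')
  have hp : Continuous fun x => exp (p x) := by fun_prop
  have hG : Antitone fun x => ∫ v' in Icc x VF, exp (p v') :=
    antitone_setIntegral_Icc_left hp (fun _ => (exp_pos _).le) VF
  have hH : Antitone H := hG.comp_monotone fun _ _ h => max_le_max_left VR h
  have hH_bound : ∀ v, ‖H v‖ ≤ ∫ v' in Icc VR VF, exp (p v') := fun v => by
    rw [norm_of_nonneg (setIntegral_nonneg measurableSet_Icc fun _ _ => (exp_pos _).le)]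
    exact hG (le_max_left VR v)
  have hgauss : Integrable fun v => exp (-(1 / (2 * a)) * (v - c / 2) ^ 2) :=
    (integrable_exp_neg_mul_sq (by positivity)).comp_sub_right (c / 2)
  refine (hgauss.bdd_mul hH.measurable.aestronglyMeasurable (ae_of_all _ hH_bound)).congr
    (ae_of_all _ fun v => ?_)
  simp only [H, ← integral_mul_const, ← exp_add]
  congr 1 with v'
  congr 1
  simp only [p]
  field_simp
  ring

lemma partitionFn_antitone (ha : 0 < a) : Antitone (partitionFn a VR VF) := by
  intro c₁ c₂ hc
  refine integral_mono_of_nonneg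
    (ae_of_all _ fun _ => setIntegral_nonneg measurableSet_Icc fun _ _ => (exp_pos _).le)
    (integrable_partitionFn_integrand VR VF ha c₁).integrableOn (ae_of_all _ fun v => ?_)
  refine setIntegral_mono_on (Continuous.integrableOn_Icc (by fun_prop))
    (Continuous.integrableOn_Icc (by fun_prop)) measurableSet_Icc fun v' hv' => ?_
  have hvv' : v ≤ v' := (le_max_right VR v).trans hv'.1
  gcongr

end PartitionFn

lemma Zfun_le_Zfun_of_nonpos {a : ℝ} (ha : 0 < a) (VR VF : ℝ) (I : ℝ → ℝ) {σ : ℝ → ℝ}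
    {w N₁ N₂ : ℝ} (hw : w ≤ 0) (hσ : σ N₁ ≤ σ N₂) :
    Zfun a VR VF I σ w N₁ ≤ Zfun a VR VF I σ w N₂ := by
  rw [Zfun_eq_partitionFn, Zfun_eq_partitionFn]
  exact partitionFn_antitone VR VF ha (by nlinarith)

lemma integral_mul_Zfun_le {a : ℝ} (ha : 0 < a) (VR VF : ℝ) (I : ℝ → ℝ) {σ S : ℝ → ℝ}
    (hS0 : ∀ w, 0 ≤ S w) (hSsupp : ∀ᵐ w : ℝ, 0 < w → S w = 0) {N₁ N₂ : ℝ}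
    (hσ : σ N₁ ≤ σ N₂) (hint : Integrable fun w => S w * Zfun a VR VF I σ w N₂) :
    ∫ w, S w * Zfun a VR VF I σ w N₁ ≤ ∫ w, S w * Zfun a VR VF I σ w N₂ := by
  refine integral_mono_of_nonneg
    (ae_of_all _ fun w => mul_nonneg (hS0 w) (Zfun_eq_partitionFn .. ▸ partitionFn_nonneg ..))
    hint ?_
  filter_upwards [hSsupp] with w hw
  rcases le_or_gt w 0 with hw0 | hw0
  · exact mul_le_mul_of_nonneg_left (Zfun_le_Zfun_of_nonpos ha VR VF I hw0 hσ) (hS0 w)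
  · simp [hw hw0]

theorem stmt13_general (a VR VF : ℝ) (ha : 0 < a)
    (σ : ℝ → ℝ) (hσC2 : ContDiff ℝ 2 σ)
    (hσ' : ∀ N, 0 ≤ N → 0 ≤ deriv σ N)
    (I : ℝ → ℝ)
    (S : ℝ → ℝ) (hS0 : ∀ w, 0 ≤ S w)
    (hSsupp : ∀ᵐ w : ℝ, 0 < w → S w = 0) :
    ∀ N₁ N₂ : ℝ, 0 < N₁ → 0 < N₂ →
      N₁ * (∫ w, S w * Zfun a VR VF I σ w N₁) = a →
      N₂ * (∫ w, S w * Zfun a VR VF I σ w N₂) = a →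
      N₁ = N₂ := by
  have hσmono : MonotoneOn σ (Ici 0) :=
    monotoneOn_of_deriv_nonneg (convex_Ici 0) hσC2.continuous.continuousOn
      (hσC2.differentiable (by norm_num)).differentiableOn
      fun N hN => hσ' N (interior_Ici.subset hN).le
  have key : ∀ A B : ℝ, 0 < A → A ≤ B →
      A * (∫ w, S w * Zfun a VR VF I σ w A) = a →
      B * (∫ w, S w * Zfun a VR VF I σ w B) = a → A = B := by
    intro A B hA hAB eA eB
    have hint : Integrable fun w => S w * Zfun a VR VF I σ w B :=
      .of_integral_ne_zero fun h => by rw [h, mul_zero] at eB; exact ha.ne eB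
    have hle := integral_mul_Zfun_le ha VR VF I hS0 hSsupp
      (hσmono hA.le (hA.trans_le hAB).le hAB) hint
    have hpos : 0 < ∫ w, S w * Zfun a VR VF I σ w B :=
      pos_of_mul_pos_right (by rwa [eB]) (hA.trans_le hAB).le
    nlinarith
  intro N₁ N₂ h₁ h₂ e₁ e₂
  rcases le_total N₁ N₂ with h | h
  · exact key N₁ N₂ h₁ h e₁ e₂
  · exact (key N₂ N₁ h₂ h e₂ e₁).symm

/-- Uniqueness of the realizing activity for inhibitory output signals
(Theorem 4.1, uniqueness part). -/
theorem stmt13 (a VR VF : ℝ) (ha : 0 < a) (hV : VR < VF)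
    (σ : ℝ → ℝ) (hσC2 : ContDiff ℝ 2 σ) (hσ0 : ∀ N, 0 ≤ N → 0 ≤ σ N)
    (hσ' : ∀ N, 0 ≤ N → 0 ≤ deriv σ N)
    (σM : ℝ) (hσM : ∀ N, 0 ≤ N → σ N ≤ σM)
    (I : ℝ → ℝ) (hImeas : Measurable I) (nI : ℝ) (hI : ∀ x, |I x| ≤ nI)
    (S : ℝ → ℝ) (hSmeas : Measurable S) (hS0 : ∀ w, 0 ≤ S w)
    (hSint : Integrable S) (hS1 : (∫ w, S w) = 1)
    (hSsupp : ∀ᵐ w : ℝ, 0 < w → S w = 0) :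
    ∀ N₁ N₂ : ℝ, 0 < N₁ → 0 < N₂ →
      N₁ * (∫ w, S w * Zfun a VR VF I σ w N₁) = a →
      N₂ * (∫ w, S w * Zfun a VR VF I σ w N₂) = a →
      N₁ = N₂ :=
  stmt13_general a VR VF ha σ hσC2 hσ' I S hS0 hSsupp
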